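/- Suppose (U^n) solves the implicit upwind scheme for linear advection with λ > 0, and assume that for every n ∈ ℕ the sequence j ↦ (U^n_j)² is summable over ℤ. Then for every n ≥ 1 the energy estimate holds: Σ_{j∈ℤ} (U^n_j)² + Σ_{k=0}^{n−1} c^{n}_k Σ_{j∈ℤ} (U^n_j − U^k_j)² + λ Σ_{j∈ℤ} (U^n_j − U^n_{j−1})² ≤ Σ_{j∈ℤ} (U^0_j)²; in particular ‖U^n‖_{ℓ²} ≤ ‖U^0‖_{ℓ²} for all n ∈ ℕ. -/

import Mathlib

open scoped BigOperators

/-- The L1 coefficients `c^{n+1}_k` for the discrete Caputo derivative: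
`c^{n+1}_0 = (n+1)^{1-α} - n^{1-α}` and, for `1 ≤ k ≤ n`,
`c^{n+1}_k = 2(n+1-k)^{1-α} - (n+2-k)^{1-α} - (n-k)^{1-α}`. -/
noncomputable def caputoCoeff (α : ℝ) (n k : ℕ) : ℝ :=
  if k = 0 then ((n : ℝ) + 1) ^ (1 - α) - (n : ℝ) ^ (1 - α)
  else 2 * ((n : ℝ) + 1 - (k : ℝ)) ^ (1 - α) - ((n : ℝ) + 2 - (k : ℝ)) ^ (1 - α)
    - ((n : ℝ) - (k : ℝ)) ^ (1 - α)

/-- `U` solves the implicit upwind scheme for the linear advection equation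
with flux `f(u) = a u`, `a > 0`, where `lam = a τ^α / (h Γ(2-α))`. -/
def SolvesImplicitAdvection (α lam : ℝ) (U : ℕ → ℤ → ℝ) : Prop :=
  ∀ (n : ℕ) (j : ℤ),
    U (n + 1) j = (∑ k ∈ Finset.range (n + 1), caputoCoeff α n k * U k j)
      - lam * (U (n + 1) j - U (n + 1) (j - 1))

/-!
Since the L1 weights `c^{n+1}_k` are nonnegative and sum to one (they telescope, and the
concavity of `x ↦ x^{1-α}` makes them nonnegative), the scheme can be rewritten as
`Σ_k c_k (U^{n+1}_j - U^k_j) + λ (U^{n+1}_j - U^{n+1}_{j-1}) = 0`. Testing it with `2 U^{n+1}_j`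
and using `2u(u - v) = u² - v² + (u - v)²` together with the shift invariance of the `ℓ²` norm
gives the energy identity
`‖U^{n+1}‖² + Σ_k c_k ‖U^{n+1} - U^k‖² + λ ‖U^{n+1} - U^{n+1}_{·-1}‖² = Σ_k c_k ‖U^k‖²`.
The right-hand side is a convex combination of earlier energies, so strong induction bounds all
energies by `‖U^0‖²`, and then the identity gives the full estimate.
-/

open Finset

noncomputable def rpowIncrement (β x : ℝ) : ℝ := (x + 1) ^ β - x ^ β

lemma rpowIncrement_succ_le {β x : ℝ} (hβ₀ : 0 ≤ β) (hβ₁ : β ≤ 1) (hx : 0 ≤ x) :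
    rpowIncrement β (x + 1) ≤ rpowIncrement β x := by
  have h := (Real.concaveOn_rpow hβ₀ hβ₁).slope_anti_adjacent (x := x) (y := x + 1)
    (z := x + 1 + 1) hx (Set.mem_Ici.2 (by linarith)) (by linarith) (by linarith)
  simp only [add_sub_cancel_left, div_one] at h
  exact h

lemma rpowIncrement_zero {β : ℝ} (hβ : β ≠ 0) : rpowIncrement β 0 = 1 := by
  simp [rpowIncrement, Real.zero_rpow hβ]

lemma caputoCoeff_zero (α : ℝ) (n : ℕ) : caputoCoeff α n 0 = rpowIncrement (1 - α) n := by
  simp [caputoCoeff, rpowIncrement]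

lemma caputoCoeff_succ (α : ℝ) (n k : ℕ) :
    caputoCoeff α n (k + 1) =
      rpowIncrement (1 - α) (n - (k + 1 : ℕ)) - rpowIncrement (1 - α) (n - k) := by
  simp only [caputoCoeff, rpowIncrement, if_neg k.succ_ne_zero]
  push_cast
  ring_nf

lemma caputoCoeff_nonneg {α : ℝ} (hα₀ : 0 ≤ α) (hα₁ : α ≤ 1) {n k : ℕ} (hk : k ≤ n) :
    0 ≤ caputoCoeff α n k := by
  cases k with
  | zero =>
    rw [caputoCoeff_zero]
    exact sub_nonneg.2 (Real.rpow_le_rpow n.cast_nonneg (by linarith) (by linarith))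
  | succ k =>
    have hx : (0 : ℝ) ≤ n - (k + 1 : ℕ) := sub_nonneg.2 (mod_cast hk)
    have hshift : (n : ℝ) - k = n - (k + 1 : ℕ) + 1 := by push_cast; ring
    rw [caputoCoeff_succ, hshift]
    exact sub_nonneg.2 (rpowIncrement_succ_le (by linarith) (by linarith) hx)

lemma sum_caputoCoeff {α : ℝ} (hα : α < 1) (n : ℕ) :
    ∑ k ∈ range (n + 1), caputoCoeff α n k = 1 := by
  have htele := sum_range_sub (fun k : ℕ => rpowIncrement (1 - α) (n - k)) n
  simp only [← caputoCoeff_succ] at htele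
  rw [sum_range_succ', htele, caputoCoeff_zero, Nat.cast_zero, sub_zero, sub_self,
    rpowIncrement_zero (by linarith), sub_add_cancel]

lemma sum_caputoCoeff_mul_le {α : ℝ} (hα₀ : 0 ≤ α) (hα₁ : α < 1) {n : ℕ} {x : ℕ → ℝ} {M : ℝ}
    (hx : ∀ k ≤ n, x k ≤ M) : ∑ k ∈ range (n + 1), caputoCoeff α n k * x k ≤ M :=
  calc ∑ k ∈ range (n + 1), caputoCoeff α n k * x k
      ≤ ∑ k ∈ range (n + 1), caputoCoeff α n k * M := by
        refine sum_le_sum fun k hk => ?_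
        have hk : k ≤ n := Nat.lt_succ_iff.1 (mem_range.1 hk)
        exact mul_le_mul_of_nonneg_left (hx k hk) (caputoCoeff_nonneg hα₀ hα₁.le hk)
    _ = M := by rw [← sum_mul, sum_caputoCoeff hα₁, one_mul]

section SquareSummable

variable {ι : Type*} {f g : ι → ℝ}

lemma summable_sub_sq (hf : Summable fun i => f i ^ 2) (hg : Summable fun i => g i ^ 2) :
    Summable fun i => (f i - g i) ^ 2 :=
  Summable.of_nonneg_of_le (fun _ => sq_nonneg _)
    (fun i => by nlinarith [sq_nonneg (f i + g i)]) ((hf.add hg).mul_left 2)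

lemma summable_two_mul_mul_sub (hf : Summable fun i => f i ^ 2)
    (hg : Summable fun i => g i ^ 2) : Summable fun i => 2 * f i * (f i - g i) :=
  ((hf.sub hg).add (summable_sub_sq hf hg)).congr fun i => by ring

lemma tsum_two_mul_mul_sub (hf : Summable fun i => f i ^ 2)
    (hg : Summable fun i => g i ^ 2) :
    ∑' i, 2 * f i * (f i - g i) = ∑' i, f i ^ 2 - ∑' i, g i ^ 2 + ∑' i, (f i - g i) ^ 2 := by
  rw [← hf.tsum_sub hg, ← (hf.sub hg).tsum_add (summable_sub_sq hf hg)]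
  exact tsum_congr fun i => by ring

end SquareSummable

namespace SolvesImplicitAdvection

variable {α lam : ℝ} {U : ℕ → ℤ → ℝ}

lemma sum_mul_sub_add_eq_zero (hU : SolvesImplicitAdvection α lam U) (hα : α < 1)
    (n : ℕ) (j : ℤ) :
    ∑ k ∈ range (n + 1), caputoCoeff α n k * (U (n + 1) j - U k j)
      + lam * (U (n + 1) j - U (n + 1) (j - 1)) = 0 := by
  simp only [mul_sub, sum_sub_distrib, ← sum_mul, sum_caputoCoeff hα, one_mul]
  linarith [hU n j]

lemma energy_identity (hU : SolvesImplicitAdvection α lam U) (hα : α < 1)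
    (hsum : ∀ n, Summable fun j : ℤ => U n j ^ 2) (n : ℕ) :
    ∑' j, U (n + 1) j ^ 2
      + ∑ k ∈ range (n + 1), caputoCoeff α n k * ∑' j, (U (n + 1) j - U k j) ^ 2
      + lam * ∑' j, (U (n + 1) j - U (n + 1) (j - 1)) ^ 2
    = ∑ k ∈ range (n + 1), caputoCoeff α n k * ∑' j, U k j ^ 2 := by
  set u := U (n + 1)
  have hu : Summable fun j => u j ^ 2 := hsum (n + 1)
  have hshift : Summable fun j : ℤ => u (j - 1) ^ 2 := (Equiv.subRight (1 : ℤ)).summable_iff.2 hu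
  have hshift_eq : ∑' j : ℤ, u (j - 1) ^ 2 = ∑' j, u j ^ 2 :=
    (Equiv.subRight (1 : ℤ)).tsum_eq fun j => u j ^ 2
  have htested : ∑' j, (∑ k ∈ range (n + 1), caputoCoeff α n k * (2 * u j * (u j - U k j))
      + lam * (2 * u j * (u j - u (j - 1)))) = 0 := by
    refine (tsum_congr fun j => ?_).trans tsum_zero
    calc _ = 2 * u j * (∑ k ∈ range (n + 1), caputoCoeff α n k * (u j - U k j)
          + lam * (u j - u (j - 1))) := by
          rw [mul_add, mul_sum]
          congr 1
          · exact sum_congr rfl fun _ _ => by ring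
          · ring
      _ = 0 := by rw [hU.sum_mul_sub_add_eq_zero hα n j, mul_zero]
  have hterms : ∀ k ∈ range (n + 1),
      Summable fun j => caputoCoeff α n k * (2 * u j * (u j - U k j)) :=
    fun k _ => (summable_two_mul_mul_sub hu (hsum k)).mul_left _
  have htested_terms : ∀ k ∈ range (n + 1),
      ∑' j, caputoCoeff α n k * (2 * u j * (u j - U k j)) = caputoCoeff α n k *
        (∑' j, u j ^ 2 - ∑' j, U k j ^ 2 + ∑' j, (u j - U k j) ^ 2) := fun k _ => by
    rw [tsum_mul_left, tsum_two_mul_mul_sub hu (hsum k)]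
  have htested_shift : ∑' j, lam * (2 * u j * (u j - u (j - 1))) =
      lam * ∑' j, (u j - u (j - 1)) ^ 2 := by
    rw [tsum_mul_left, tsum_two_mul_mul_sub hu hshift, hshift_eq, sub_self, zero_add]
  rw [(summable_sum hterms).tsum_add ((summable_two_mul_mul_sub hu hshift).mul_left _),
    Summable.tsum_finsetSum hterms, sum_congr rfl htested_terms, htested_shift] at htested
  simp only [mul_add, mul_sub, sum_add_distrib, sum_sub_distrib, ← sum_mul,
    sum_caputoCoeff hα, one_mul] at htested
  linarith

lemma tsum_sq_le_tsum_sq_zero (hU : SolvesImplicitAdvection α lam U) (hα₀ : 0 ≤ α) (hα₁ : α < 1)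
    (hlam : 0 ≤ lam) (hsum : ∀ n, Summable fun j : ℤ => U n j ^ 2) (n : ℕ) :
    ∑' j, U n j ^ 2 ≤ ∑' j, U 0 j ^ 2 := by
  induction n using Nat.strong_induction_on with
  | _ n ih =>
    cases n with
    | zero => exact le_rfl
    | succ m =>
      have hdiff : 0 ≤ ∑ k ∈ range (m + 1), caputoCoeff α m k
          * ∑' j, (U (m + 1) j - U k j) ^ 2 :=
        sum_nonneg fun k hk => mul_nonneg
          (caputoCoeff_nonneg hα₀ hα₁.le (Nat.lt_succ_iff.1 (mem_range.1 hk)))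
          (tsum_nonneg fun _ => sq_nonneg _)
      have hgrad : 0 ≤ lam * ∑' j, (U (m + 1) j - U (m + 1) (j - 1)) ^ 2 :=
        mul_nonneg hlam (tsum_nonneg fun _ => sq_nonneg _)
      have hconv := sum_caputoCoeff_mul_le hα₀ hα₁ fun k hk => ih k (Nat.lt_succ_of_le hk)
      linarith [hU.energy_identity hα₁ hsum m]

end SolvesImplicitAdvection

/-- energy estimate for the implicit upwind scheme for linear advection:
for `n ≥ 1`,
`Σ_j (U^n_j)² + Σ_{k=0}^{n-1} c^n_k Σ_j (U^n_j - U^k_j)² + λ Σ_j (U^n_j - U^n_{j-1})²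
  ≤ Σ_j (U^0_j)²`, and in particular `‖U^n‖_{ℓ²} ≤ ‖U^0‖_{ℓ²}` for all `n`. -/
theorem implicit_advection_energy_estimate (α τ h a : ℝ)
    (hα : α ∈ Set.Ioo (0 : ℝ) 1) (hτ : 0 < τ) (hh : 0 < h) (ha : 0 < a)
    (lam : ℝ) (hlam : lam = a * τ ^ α / (h * Real.Gamma (2 - α)))
    (U : ℕ → ℤ → ℝ) (hU : SolvesImplicitAdvection α lam U)
    (hsum : ∀ n : ℕ, Summable (fun j : ℤ => (U n j) ^ 2)) :
    (∀ n : ℕ, 1 ≤ n →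
      (∑' j : ℤ, (U n j) ^ 2)
        + (∑ k ∈ Finset.range n, caputoCoeff α (n - 1) k
            * ∑' j : ℤ, (U n j - U k j) ^ 2)
        + lam * ∑' j : ℤ, (U n j - U n (j - 1)) ^ 2
      ≤ ∑' j : ℤ, (U 0 j) ^ 2) ∧
    (∀ n : ℕ, ∑' j : ℤ, (U n j) ^ 2 ≤ ∑' j : ℤ, (U 0 j) ^ 2) := by
  have hlam₀ : 0 ≤ lam := by
    have hΓ := Real.Gamma_pos_of_pos (by linarith [hα.2] : 0 < 2 - α)
    have hτα := Real.rpow_pos_of_pos hτ α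
    rw [hlam]
    positivity
  have hstable := hU.tsum_sq_le_tsum_sq_zero hα.1.le hα.2 hlam₀ hsum
  refine ⟨fun n hn => ?_, hstable⟩
  obtain ⟨m, rfl⟩ := Nat.exists_eq_add_of_le' hn
  rw [Nat.add_sub_cancel, hU.energy_identity hα.2 hsum m]
  exact sum_caputoCoeff_mul_le hα.1.le hα.2 fun k _ => hstable k
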